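/- In stable matching with general (oblivious) reward sharing and friendship utilities, if a stable matching exists then the price of anarchy is at most 1+Q, where Q = (R+α₁)/(1+α₁R) and R is the maximum over edges of the ratio of the two reward shares. -/

import Mathlib

open Finset

variable {V : Type*} [Fintype V] [DecidableEq V]

/-- `partnerReward r M x` is the reward share that node `x` obtains in matching `M`:
`r x y` if `x` is matched to `y`, and `0` if `x` is unmatched. -/
def partnerReward (r : V → V → ℝ) (M : V → Option V) (x : V) : ℝ :=
  match M x with
  | some y => r x y
  | none => 0

/-- `M : V → Option V` encodes a matching in graph `G`. -/
def IsMatching (G : SimpleGraph V) (M : V → Option V) : Prop :=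
  (∀ u v, M u = some v → G.Adj u v) ∧ (∀ u v, M u = some v → M v = some u)

/-- The matching obtained when `u` and `v` abandon their current partners (if any)
and match to each other. -/
def rematch (M : V → Option V) (u v : V) : V → Option V :=
  fun x => if x = u then some v else if x = v then some u
    else if M x = some u ∨ M x = some v then none else M x

/-- The perceived (friendship) utility of node `v`:
`U_v = R_v + ∑_d α_d ∑_{u ∈ N_d(v)} R_u`, where the sum over nodes at distance `d`
is encoded via `α (G.dist v u)` (with `α 0 = 0` for unreachable/irrelevant pairs). -/
noncomputable def util (G : SimpleGraph V) (r : V → V → ℝ) (α : ℕ → ℝ)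
    (M : V → Option V) (v : V) : ℝ :=
  partnerReward r M v +
    ∑ u ∈ univ.filter (fun u => u ≠ v), α (G.dist v u) * partnerReward r M u

/-- `(u,v)` is a blocking pair for `M`: they are adjacent, not matched to each other,
and both strictly increase their perceived utility by matching to each other. -/
def IsBlockingPair (G : SimpleGraph V) (r : V → V → ℝ) (α : ℕ → ℝ)
    (M : V → Option V) (u v : V) : Prop :=
  G.Adj u v ∧ M u ≠ some v ∧
    util G r α M u < util G r α (rematch M u v) u ∧
    util G r α M v < util G r α (rematch M u v) v

/-- A stable matching: a matching admitting no blocking pair. -/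
def StableMatching (G : SimpleGraph V) (r : V → V → ℝ) (α : ℕ → ℝ)
    (M : V → Option V) : Prop :=
  IsMatching G M ∧ ∀ u v, ¬ IsBlockingPair G r α M u v

/-- Total weight of a matching under equal sharing (each edge counted once). -/
noncomputable def matchWeight (r : V → V → ℝ) (M : V → Option V) : ℝ :=
  (∑ v, partnerReward r M v) / 2

/-- Total reward of a matching under general reward sharing (sum of all shares). -/
noncomputable def totalWeight (r : V → V → ℝ) (M : V → Option V) : ℝ :=
  ∑ v, partnerReward r M v

/-- Admissible friendship parameters: `1 ≥ α₁ ≥ α₂ ≥ … ≥ 0` (and `α 0 = 0` as a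
convention so that only distances `d ≥ 1` contribute). -/
def FriendshipVec (α : ℕ → ℝ) : Prop :=
  α 0 = 0 ∧ α 1 ≤ 1 ∧ (∀ d, 0 ≤ α d) ∧ ∀ d e, 1 ≤ d → d ≤ e → α e ≤ α d


section PoAAux

variable {V : Type*} [Fintype V] [DecidableEq V]

/-- The perceived value of the current edge of `x` in `M`: `r x w + α₁ r w x`. -/
noncomputable def gval (r : V → V → ℝ) (α : ℕ → ℝ) (M : V → Option V) (x : V) : ℝ :=
  match M x with
  | some w => r x w + α 1 * r w x
  | none => 0

/-- The partner map of a matching, as a self-map (fixing unmatched vertices). -/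
def mpart (M : V → Option V) (x : V) : V := (M x).getD x

lemma mpart_involutive {G : SimpleGraph V} {M : V → Option V} (hM : IsMatching G M) :
    Function.Involutive (mpart M) := by
  intro x
  rcases h : M x with _ | y
  · simp [mpart, h]
  · simp [mpart, h, hM.2 x y h]

lemma sum_comp_mpart {G : SimpleGraph V} {M : V → Option V} (hM : IsMatching G M)
    (f : V → ℝ) : ∑ x, f (mpart M x) = ∑ x, f x :=
  Equiv.sum_comp ((mpart_involutive hM).toPerm) f

lemma gval_nonneg {G : SimpleGraph V} {r : V → V → ℝ} {α : ℕ → ℝ} {M : V → Option V}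
    (hpos : ∀ u v, G.Adj u v → 0 < r u v) (hM : IsMatching G M)
    (hα : FriendshipVec α) (x : V) : 0 ≤ gval r α M x := by
  rcases h : M x with _ | w
  · simp [gval, h]
  · have h1 := hpos x w (hM.1 x w h)
    have h2 := hpos w x ((hM.1 x w h).symm)
    have h3 := hα.2.2.1 1
    simp only [gval, h]
    positivity

lemma alg_ineq (a b α1 R : ℝ) (ha : 0 < a) (hb : 0 < b) (hba : b ≤ R * a)
    (h0 : 0 ≤ α1) (h1 : α1 ≤ 1) (hR : 1 ≤ R) :
    (1 + α1) * (a + b) ≤ (1 + (R + α1) / (1 + α1 * R)) * (a + α1 * b) := by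
  have hden : (0:ℝ) < 1 + α1 * R := by nlinarith
  have hsq : (0:ℝ) ≤ 1 - α1 ^ 2 := by nlinarith
  have key : (b + α1 * a) * (1 + α1 * R) ≤ (R + α1) * (a + α1 * b) := by
    nlinarith [mul_nonneg (sub_nonneg.mpr hba) hsq]
  have hq : b + α1 * a ≤ (R + α1) / (1 + α1 * R) * (a + α1 * b) := by
    rw [div_mul_eq_mul_div, le_div_iff₀ hden]
    linarith
  nlinarith [hq]

lemma rematch_comm (M : V → Option V) (u v : V) : rematch M u v = rematch M v u ∨ u = v := by
  by_cases huv : u = v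
  · exact Or.inr huv
  · left
    funext x
    simp only [rematch]
    by_cases h1 : x = u <;> by_cases h2 : x = v
    · exact absurd (h1.symm.trans h2) huv
    · simp [h1, h2, huv]
    · simp [h1, h2, huv]
    · simp only [h1, h2, if_false]
      exact if_congr or_comm rfl rfl

/-- Key consequence of one endpoint not improving by the rematch. -/
lemma key_ineq (G : SimpleGraph V) (r : V → V → ℝ) (α : ℕ → ℝ)
    (hα : FriendshipVec α) (hpos : ∀ u v, G.Adj u v → 0 < r u v)
    (M : V → Option V) (hM : IsMatching G M)
    (x y : V) (hadj : G.Adj x y) (hxy : M x ≠ some y)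
    (hni : util G r α (rematch M x y) x ≤ util G r α M x) :
    r x y + α 1 * r y x ≤ gval r α M x + gval r α M y := by
  obtain ⟨hα0, hα11, hαnn, hαmono⟩ := hα
  have hxny : x ≠ y := hadj.ne
  set M' := rematch M x y with hM'def
  set s := univ.filter (fun u => u ≠ x) with hs
  have hys : y ∈ s := by simp [hs, Ne.symm hxny]
  have hdxy : G.dist x y = 1 := SimpleGraph.dist_eq_one_iff_adj.mpr hadj
  have hpRx' : partnerReward r M' x = r x y := by
    simp [partnerReward, hM'def, rematch]
  -- pointwise decomposition of the rematched partner rewards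
  have hpoint : ∀ u ∈ s, α (G.dist x u) * partnerReward r M' u
      = α (G.dist x u) * (if u = y then r y x else partnerReward r M u)
        - (if M u = some x then α (G.dist x u) * partnerReward r M u else 0)
        - (if M u = some y ∧ u ≠ y then α (G.dist x u) * partnerReward r M u else 0) := by
    intro u hu
    have hux : u ≠ x := by simpa [hs] using hu
    by_cases huy : u = y
    · subst huy
      have h1 : M u ≠ some x := fun h => hxy (hM.2 u x h)
      have h2 : ¬ (M u = some u ∧ u ≠ u) := by simp
      rw [if_pos rfl, if_neg h1, if_neg h2]
      have hv : partnerReward r M' u = r u x := by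
        simp [partnerReward, hM'def, rematch, hux]
      rw [hv]; ring
    · by_cases h1 : M u = some x
      · have h2 : ¬ (M u = some y ∧ u ≠ y) := by
          simp [h1, hxny]
        rw [if_neg huy, if_pos h1, if_neg h2]
        have hv : partnerReward r M' u = 0 := by
          simp [partnerReward, hM'def, rematch, hux, huy, h1]
        rw [hv]; ring
      · by_cases h2 : M u = some y
        · rw [if_neg huy, if_neg h1, if_pos ⟨h2, huy⟩]
          have hv : partnerReward r M' u = 0 := by
            simp [partnerReward, hM'def, rematch, hux, huy, h2]
          rw [hv]; ring
        · rw [if_neg huy, if_neg h1, if_neg (by tauto)]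
          have hv : partnerReward r M' u = partnerReward r M u := by
            simp [partnerReward, hM'def, rematch, hux, huy, h1, h2]
          rw [hv]; ring
  set A := ∑ u ∈ s, α (G.dist x u) * partnerReward r M u with hA
  have hsum1 : ∑ u ∈ s, α (G.dist x u) * (if u = y then r y x else partnerReward r M u)
      = A + α 1 * (r y x - partnerReward r M y) := by
    have h : ∀ u ∈ s, α (G.dist x u) * (if u = y then r y x else partnerReward r M u)
        = α (G.dist x u) * partnerReward r M u
          + (if u = y then α (G.dist x u) * (r y x - partnerReward r M u) else 0) := by
      intro u _
      by_cases h : u = y <;> simp [h] <;> ring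
    rw [Finset.sum_congr rfl h, Finset.sum_add_distrib, Finset.sum_ite_eq' s y]
    simp [hys, hdxy, hA]
  -- the sum of the x-partner correction term
  have hgx : partnerReward r M x
      + (∑ u ∈ s, if M u = some x then α (G.dist x u) * partnerReward r M u else 0)
      = gval r α M x := by
    rcases hmx : M x with _ | w
    · rw [Finset.sum_eq_zero]
      · simp [partnerReward, gval, hmx]
      · intro u _
        rw [if_neg]
        intro h
        rw [hM.2 u x h] at hmx
        exact Option.some_ne_none _ hmx
    · have hadjxw := hM.1 x w hmx
      have hwx : M w = some x := hM.2 x w hmx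
      have hws : w ∈ s := by simp [hs, hadjxw.ne']
      have hsum : (∑ u ∈ s, if M u = some x then α (G.dist x u) * partnerReward r M u else 0)
          = α 1 * r w x := by
        rw [Finset.sum_eq_single_of_mem w hws]
        · rw [if_pos hwx]
          simp [partnerReward, hwx, SimpleGraph.dist_eq_one_iff_adj.mpr hadjxw]
        · intro u _ hu
          rw [if_neg]
          intro h
          have := hM.2 u x h
          rw [this] at hmx
          exact hu (Option.some_injective _ hmx)
      rw [hsum]
      simp [partnerReward, gval, hmx]
  -- the sum of the y-partner correction term
  have hgy : α 1 * partnerReward r M y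
      + (∑ u ∈ s, if M u = some y ∧ u ≠ y then α (G.dist x u) * partnerReward r M u else 0)
      ≤ gval r α M y := by
    rcases hmy : M y with _ | z
    · rw [Finset.sum_eq_zero]
      · simp [partnerReward, gval, hmy]
      · intro u _
        rw [if_neg]
        rintro ⟨h, hu⟩
        rw [hM.2 u y h] at hmy
        exact Option.some_ne_none _ hmy
    · have hadjyz := hM.1 y z hmy
      have hzy : M z = some y := hM.2 y z hmy
      have hzney : z ≠ y := hadjyz.ne'
      have hznex : z ≠ x := by
        intro h
        subst h
        exact hxy (hM.2 y z hmy)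
      have hzs : z ∈ s := by simp [hs, hznex]
      have hsum : (∑ u ∈ s, if M u = some y ∧ u ≠ y then α (G.dist x u) * partnerReward r M u else 0)
          = α (G.dist x z) * r z y := by
        rw [Finset.sum_eq_single_of_mem z hzs]
        · rw [if_pos ⟨hzy, hzney⟩]
          simp [partnerReward, hzy]
        · intro u _ hu
          rw [if_neg]
          rintro ⟨h, _⟩
          have := hM.2 u y h
          rw [this] at hmy
          exact hu (Option.some_injective _ hmy)
      rw [hsum]
      have hreach : G.Reachable x z := hadj.reachable.trans hadjyz.reachable
      have hdz : 0 < G.dist x z := hreach.pos_dist_of_ne (Ne.symm hznex)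
      have hαz : α (G.dist x z) ≤ α 1 := hαmono 1 (G.dist x z) le_rfl hdz
      have hryz := hpos y z hadjyz
      have hrzy := hpos z y hadjyz.symm
      have h1 : α (G.dist x z) * r z y ≤ α 1 * r z y :=
        mul_le_mul_of_nonneg_right hαz hrzy.le
      have h2 : α 1 * r y z ≤ 1 * r y z :=
        mul_le_mul_of_nonneg_right hα11 hryz.le
      simp only [partnerReward, gval, hmy]
      linarith
  -- assemble
  have hexp : util G r α M' x
      = r x y + (A + α 1 * (r y x - partnerReward r M y)
        - (∑ u ∈ s, if M u = some x then α (G.dist x u) * partnerReward r M u else 0)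
        - (∑ u ∈ s, if M u = some y ∧ u ≠ y then α (G.dist x u) * partnerReward r M u else 0)) := by
    unfold util
    rw [hpRx', Finset.sum_congr rfl hpoint]
    rw [Finset.sum_sub_distrib, Finset.sum_sub_distrib, hsum1]
  have hexpM : util G r α M x = partnerReward r M x + A := rfl
  rw [hexp, hexpM] at hni
  linarith

end PoAAux


/-- Per-edge bound: any edge of the graph is covered by the `gval`s of its endpoints. -/
lemma stepA (G : SimpleGraph V) (r : V → V → ℝ) (α : ℕ → ℝ) (R : ℝ)
    (hα : FriendshipVec α) (hR : 1 ≤ R)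
    (hpos : ∀ u v, G.Adj u v → 0 < r u v)
    (hratio : ∀ u v, G.Adj u v → r u v ≤ R * r v u)
    (M : V → Option V) (hM : StableMatching G r α M)
    (x y : V) (hadj : G.Adj x y) :
    r x y + r y x ≤ (1 + (R + α 1) / (1 + α 1 * R)) / (1 + α 1)
      * (gval r α M x + gval r α M y) := by
  have hα1 : 0 ≤ α 1 := hα.2.2.1 1
  have hα11 : α 1 ≤ 1 := hα.2.1
  have h1α : (0:ℝ) < 1 + α 1 := by linarith
  have hden : (0:ℝ) < 1 + α 1 * R := by nlinarith
  have hQ : 0 ≤ (R + α 1) / (1 + α 1 * R) := div_nonneg (by linarith) hden.le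
  have ha := hpos x y hadj
  have hb := hpos y x hadj.symm
  rw [div_mul_eq_mul_div, le_div_iff₀ h1α]
  by_cases hmx : M x = some y
  · have hmy : M y = some x := hM.1.2 x y hmx
    have hg : gval r α M x + gval r α M y = (1 + α 1) * (r x y + r y x) := by
      simp only [gval, hmx, hmy]; ring
    rw [hg]
    nlinarith [mul_nonneg hQ (by positivity : (0:ℝ) ≤ (1 + α 1) * (r x y + r y x))]
  · -- (x, y) is not a blocking pair
    have hnb := hM.2 x y
    rw [IsBlockingPair] at hnb
    push_neg at hnb
    rcases le_or_gt (util G r α (rematch M x y) x) (util G r α M x) with h1 | h1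
    · have hkey := key_ineq G r α hα hpos M hM.1 x y hadj hmx h1
      have halg := alg_ineq (r x y) (r y x) (α 1) R ha hb (hratio y x hadj.symm) hα1 hα11 hR
      nlinarith [mul_le_mul_of_nonneg_left hkey (by linarith : (0:ℝ) ≤ 1 + (R + α 1) / (1 + α 1 * R))]
    · have h2 := hnb hadj hmx h1
      have hmy : M y ≠ some x := fun h => hmx (hM.1.2 y x h)
      have hre : rematch M x y = rematch M y x :=
        ((rematch_comm M y x).resolve_right (fun h => hadj.ne h.symm)).symm
      rw [hre] at h2
      have hkey := key_ineq G r α hα hpos M hM.1 y x hadj.symm hmy h2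
      have halg := alg_ineq (r y x) (r x y) (α 1) R hb ha (hratio x y hadj) hα1 hα11 hR
      nlinarith [mul_le_mul_of_nonneg_left hkey (by linarith : (0:ℝ) ≤ 1 + (R + α 1) / (1 + α 1 * R))]

/-- with general (oblivious) reward sharing and friendship utilities,
if all share ratios are bounded by R, then any stable matching is within a factor
1 + Q of any matching, where Q = (R + α₁)/(1 + α₁ R). -/
theorem poa_general_sharing_friendship
    (G : SimpleGraph V) (r : V → V → ℝ) (α : ℕ → ℝ) (R : ℝ)
    (hα : FriendshipVec α) (hR : 1 ≤ R)
    (hpos : ∀ u v, G.Adj u v → 0 < r u v)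
    (hratio : ∀ u v, G.Adj u v → r u v ≤ R * r v u)
    (M Mstar : V → Option V)
    (hM : StableMatching G r α M) (hMstar : IsMatching G Mstar) :
    totalWeight r Mstar ≤ (1 + (R + α 1) / (1 + α 1 * R)) * totalWeight r M := by
  have hα1 : 0 ≤ α 1 := hα.2.2.1 1
  have h1α : (0:ℝ) < 1 + α 1 := by linarith
  have hden : (0:ℝ) < 1 + α 1 * R := by nlinarith
  have hQ : 0 ≤ (R + α 1) / (1 + α 1 * R) := div_nonneg (by linarith) hden.le
  set c := (1 + (R + α 1) / (1 + α 1 * R)) / (1 + α 1) with hc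
  have hcnn : 0 ≤ c := div_nonneg (by linarith) h1α.le
  have hpt : ∀ x, partnerReward r Mstar x + partnerReward r Mstar (mpart Mstar x)
      ≤ c * (gval r α M x + gval r α M (mpart Mstar x)) := by
    intro x
    rcases hmx : Mstar x with _ | y
    · have h0 : mpart Mstar x = x := by simp [mpart, hmx]
      rw [h0]
      have hg := gval_nonneg hpos hM.1 hα x
      have hp : partnerReward r Mstar x = 0 := by simp [partnerReward, hmx]
      rw [hp]
      nlinarith
    · have hyx : Mstar y = some x := hMstar.2 x y hmx
      have hadj := hMstar.1 x y hmx
      have h0 : mpart Mstar x = y := by simp [mpart, hmx]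
      rw [h0]
      have h2 : partnerReward r Mstar x = r x y := by simp [partnerReward, hmx]
      have h3 : partnerReward r Mstar y = r y x := by simp [partnerReward, hyx]
      rw [h2, h3]
      exact stepA G r α R hα hR hpos hratio M hM x y hadj
  have hsum := Finset.sum_le_sum (fun x (_ : x ∈ (univ : Finset V)) => hpt x)
  have hL : ∑ x, (partnerReward r Mstar x + partnerReward r Mstar (mpart Mstar x))
      = 2 * totalWeight r Mstar := by
    rw [Finset.sum_add_distrib, sum_comp_mpart hMstar]
    unfold totalWeight; ring
  have hgv : ∀ x, gval r α M x
      = partnerReward r M x + α 1 * partnerReward r M (mpart M x) := by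
    intro x
    rcases hmx : M x with _ | w
    · simp [gval, partnerReward, mpart, hmx]
    · have hwx : M w = some x := hM.1.2 x w hmx
      simp [gval, partnerReward, mpart, hmx, hwx]
  have hT : ∑ x, gval r α M x = (1 + α 1) * totalWeight r M := by
    rw [Finset.sum_congr rfl (fun x _ => hgv x), Finset.sum_add_distrib,
      ← Finset.mul_sum, sum_comp_mpart hM.1]
    unfold totalWeight; ring
  have hRt : ∑ x, c * (gval r α M x + gval r α M (mpart Mstar x))
      = 2 * (c * ((1 + α 1) * totalWeight r M)) := by
    rw [← Finset.mul_sum, Finset.sum_add_distrib, sum_comp_mpart hMstar, hT]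
    ring
  rw [hL, hRt] at hsum
  have hfinal : c * ((1 + α 1) * totalWeight r M)
      = (1 + (R + α 1) / (1 + α 1 * R)) * totalWeight r M := by
    rw [← mul_assoc, hc, div_mul_cancel₀ _ h1α.ne']
  rw [hfinal] at hsum
  linarith
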